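/- arXiv:math/0509452 — 2 statements merged into one kernel-verified Lean document; each statement's English description precedes it below -/
import Mathlib

section
/- Let U ⊆ ℝ³ be open and let α, β, δ, ε, ζ be smooth real-valued functions on U with β and ζ nowhere zero. Consider the frame e₁ = α∂₁ + β∂₂, e₂ = δ∂₁ + ε∂₂ + ζ∂₃, e₃ = ∂₁ on U, with structure functions c_{αβ}^γ defined by [e_α,e_β] = Σ_γ c_{αβ}^γ e_γ. Then the five conditions c₃₁³ = 0, c₃₂³ = 0, c₁₂³ = 2, c₃₁¹ = 0, c₃₂² = 0 hold on U if and only if the contact system in simplifying coordinates holds on U, namely: (S1) α₁ = 0; (S2) βδ₁ = αε₁; (S3) β(αε − δβ)ζ₂ + (αβ₃ − βα₃)ζ² + (β²δ₂ − αβε₂ + αεβ₂ − βεα₂ − 2β)ζ = 0; (S4) β₁ = 0; (S5) ζ₁ = 0. -/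
open Matrix

/-- Partial derivative `∂f/∂xⁱ`. -/
noncomputable def pd (i : Fin 3) (f : (Fin 3 → ℝ) → ℝ) (p : Fin 3 → ℝ) : ℝ :=
  fderiv ℝ f p (Pi.single i 1)

/-- Lie bracket of vector fields on `ℝ³`. -/
noncomputable def vbracket (X Y : (Fin 3 → ℝ) → (Fin 3 → ℝ)) (p : Fin 3 → ℝ) :
    Fin 3 → ℝ :=
  fderiv ℝ Y p (X p) - fderiv ℝ X p (Y p)

private lemma dir_eq (f : (Fin 3 → ℝ) → ℝ) (p v : Fin 3 → ℝ) :
    fderiv ℝ f p v = v 0 * pd 0 f p + v 1 * pd 1 f p + v 2 * pd 2 f p := by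
  have hv : v = v 0 • (Pi.single 0 1 : Fin 3 → ℝ) + v 1 • (Pi.single 1 1 : Fin 3 → ℝ)
      + v 2 • (Pi.single 2 1 : Fin 3 → ℝ) := by
    funext i; fin_cases i <;> simp [Pi.single_apply]
  conv_lhs => rw [hv]
  simp [pd]

private lemma fderiv_vec (F G H : (Fin 3 → ℝ) → ℝ) (p v : Fin 3 → ℝ)
    (hF : DifferentiableAt ℝ F p) (hG : DifferentiableAt ℝ G p)
    (hH : DifferentiableAt ℝ H p) (i : Fin 3) :
    fderiv ℝ (fun x => (![F x, G x, H x] : Fin 3 → ℝ)) p v i =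
      (![fderiv ℝ F p v, fderiv ℝ G p v, fderiv ℝ H p v] : Fin 3 → ℝ) i := by
  have h : ∀ j : Fin 3, DifferentiableAt ℝ (fun x => (![F x, G x, H x] : Fin 3 → ℝ) j) p := by
    intro j; fin_cases j <;> simpa
  rw [fderiv_pi h]
  fin_cases i <;> simp

/-- for the simplifying-coordinates frame `e₁ = α∂₁ + β∂₂`,
`e₂ = δ∂₁ + ε∂₂ + ζ∂₃`, `e₃ = ∂₁` with structure functions `c`, the five conditions
`c₃₁³ = 0`, `c₃₂³ = 0`, `c₁₂³ = 2`, `c₃₁¹ = 0`, `c₃₂² = 0` hold on `U` iff the contact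
system (S1)–(S5) holds on `U`. (Coordinates `x¹,x²,x³` are indices `0,1,2`.) -/
theorem stmt_4 (U : Set (Fin 3 → ℝ)) (hU : IsOpen U)
    (α β δ ε ζ : (Fin 3 → ℝ) → ℝ)
    (hα : ContDiffOn ℝ (⊤ : ℕ∞) α U) (hβs : ContDiffOn ℝ (⊤ : ℕ∞) β U)
    (hδ : ContDiffOn ℝ (⊤ : ℕ∞) δ U) (hε : ContDiffOn ℝ (⊤ : ℕ∞) ε U)
    (hζs : ContDiffOn ℝ (⊤ : ℕ∞) ζ U)
    (hβ : ∀ p ∈ U, β p ≠ 0) (hζ : ∀ p ∈ U, ζ p ≠ 0)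
    (e : Fin 3 → (Fin 3 → ℝ) → (Fin 3 → ℝ))
    (he : e = ![fun p => ![α p, β p, 0], fun p => ![δ p, ε p, ζ p], fun _ => ![1, 0, 0]])
    (c : Fin 3 → Fin 3 → Fin 3 → (Fin 3 → ℝ) → ℝ)
    (hc : ∀ a b : Fin 3, ∀ p ∈ U,
      vbracket (e a) (e b) p = ∑ γ : Fin 3, c a b γ p • e γ p) :
    (∀ p ∈ U,
      c 2 0 2 p = 0 ∧ c 2 1 2 p = 0 ∧ c 0 1 2 p = 2 ∧ c 2 0 0 p = 0 ∧ c 2 1 1 p = 0) ↔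
    (∀ p ∈ U,
      pd 0 α p = 0 ∧
      β p * pd 0 δ p = α p * pd 0 ε p ∧
      β p * (α p * ε p - δ p * β p) * pd 1 ζ p +
        (α p * pd 2 β p - β p * pd 2 α p) * ζ p ^ 2 +
        (β p ^ 2 * pd 1 δ p - α p * β p * pd 1 ε p + α p * ε p * pd 1 β p -
          β p * ε p * pd 1 α p - 2 * β p) * ζ p = 0 ∧
      pd 0 β p = 0 ∧
      pd 0 ζ p = 0) := by
  have key : ∀ p ∈ U,
      (pd 0 α p = c 2 0 0 p * α p + c 2 0 1 p * δ p + c 2 0 2 p) ∧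
      (pd 0 β p = c 2 0 0 p * β p + c 2 0 1 p * ε p) ∧
      (0 = c 2 0 1 p * ζ p) ∧
      (pd 0 δ p = c 2 1 0 p * α p + c 2 1 1 p * δ p + c 2 1 2 p) ∧
      (pd 0 ε p = c 2 1 0 p * β p + c 2 1 1 p * ε p) ∧
      (pd 0 ζ p = c 2 1 1 p * ζ p) ∧
      ((α p * pd 0 δ p + β p * pd 1 δ p)
        - (δ p * pd 0 α p + ε p * pd 1 α p + ζ p * pd 2 α p)
        = c 0 1 0 p * α p + c 0 1 1 p * δ p + c 0 1 2 p) ∧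
      ((α p * pd 0 ε p + β p * pd 1 ε p)
        - (δ p * pd 0 β p + ε p * pd 1 β p + ζ p * pd 2 β p)
        = c 0 1 0 p * β p + c 0 1 1 p * ε p) ∧
      (α p * pd 0 ζ p + β p * pd 1 ζ p = c 0 1 1 p * ζ p) := by
    intro p hp
    have dα : DifferentiableAt ℝ α p := (hα.contDiffAt (hU.mem_nhds hp)).differentiableAt (by simp)
    have dβ : DifferentiableAt ℝ β p := (hβs.contDiffAt (hU.mem_nhds hp)).differentiableAt (by simp)
    have dδ : DifferentiableAt ℝ δ p := (hδ.contDiffAt (hU.mem_nhds hp)).differentiableAt (by simp)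
    have dε : DifferentiableAt ℝ ε p := (hε.contDiffAt (hU.mem_nhds hp)).differentiableAt (by simp)
    have dζ' : DifferentiableAt ℝ ζ p := (hζs.contDiffAt (hU.mem_nhds hp)).differentiableAt (by simp)
    have E0 : e 0 = fun q => (![α q, β q, 0] : Fin 3 → ℝ) := by simp [he]
    have E1 : e 1 = fun q => (![δ q, ε q, ζ q] : Fin 3 → ℝ) := by simp [he]
    have E2 : e 2 = fun _ => (![1, 0, 0] : Fin 3 → ℝ) := by simp [he]
    have fd0 : ∀ (v : Fin 3 → ℝ) (i : Fin 3), fderiv ℝ (e 0) p v i =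
        (![fderiv ℝ α p v, fderiv ℝ β p v, 0] : Fin 3 → ℝ) i := by
      intro v i
      rw [E0]
      have := fderiv_vec α β (fun _ => 0) p v dα dβ (differentiableAt_const 0) i
      simpa using this
    have fd1 : ∀ (v : Fin 3 → ℝ) (i : Fin 3), fderiv ℝ (e 1) p v i =
        (![fderiv ℝ δ p v, fderiv ℝ ε p v, fderiv ℝ ζ p v] : Fin 3 → ℝ) i := by
      intro v i
      rw [E1]
      exact fderiv_vec δ ε ζ p v dδ dε dζ' i
    have fd2 : fderiv ℝ (e 2) p = 0 := by rw [E2]; simp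
    have h20 := hc 2 0 p hp
    have h21 := hc 2 1 p hp
    have h01 := hc 0 1 p hp
    refine ⟨?_, ?_, ?_, ?_, ?_, ?_, ?_, ?_, ?_⟩
    · have h := congrFun h20 0
      simp only [vbracket, Pi.sub_apply, fd2, ContinuousLinearMap.zero_apply, Pi.zero_apply,
        sub_zero, fd0] at h
      simp only [E0, E1, E2, Fin.sum_univ_three, Pi.add_apply, Pi.smul_apply, smul_eq_mul] at h
      simp [dir_eq] at h
      linear_combination h
    · have h := congrFun h20 1
      simp only [vbracket, Pi.sub_apply, fd2, ContinuousLinearMap.zero_apply, Pi.zero_apply,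
        sub_zero, fd0] at h
      simp only [E0, E1, E2, Fin.sum_univ_three, Pi.add_apply, Pi.smul_apply, smul_eq_mul] at h
      simp [dir_eq] at h
      linear_combination h
    · have h := congrFun h20 2
      simp only [vbracket, Pi.sub_apply, fd2, ContinuousLinearMap.zero_apply, Pi.zero_apply,
        sub_zero, fd0] at h
      simp only [E0, E1, E2, Fin.sum_univ_three, Pi.add_apply, Pi.smul_apply, smul_eq_mul] at h
      simp [dir_eq] at h
      rcases h with h | h <;> simp [h]
    · have h := congrFun h21 0
      simp only [vbracket, Pi.sub_apply, fd2, ContinuousLinearMap.zero_apply, Pi.zero_apply,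
        sub_zero, fd1] at h
      simp only [E0, E1, E2, Fin.sum_univ_three, Pi.add_apply, Pi.smul_apply, smul_eq_mul] at h
      simp [dir_eq] at h
      linear_combination h
    · have h := congrFun h21 1
      simp only [vbracket, Pi.sub_apply, fd2, ContinuousLinearMap.zero_apply, Pi.zero_apply,
        sub_zero, fd1] at h
      simp only [E0, E1, E2, Fin.sum_univ_three, Pi.add_apply, Pi.smul_apply, smul_eq_mul] at h
      simp [dir_eq] at h
      linear_combination h
    · have h := congrFun h21 2
      simp only [vbracket, Pi.sub_apply, fd2, ContinuousLinearMap.zero_apply, Pi.zero_apply,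
        sub_zero, fd1] at h
      simp only [E0, E1, E2, Fin.sum_univ_three, Pi.add_apply, Pi.smul_apply, smul_eq_mul] at h
      simp [dir_eq] at h
      linear_combination h
    · have h := congrFun h01 0
      simp only [vbracket, Pi.sub_apply, fd0, fd1] at h
      simp only [E0, E1, E2, Fin.sum_univ_three, Pi.add_apply, Pi.smul_apply, smul_eq_mul] at h
      simp [dir_eq] at h
      linear_combination h
    · have h := congrFun h01 1
      simp only [vbracket, Pi.sub_apply, fd0, fd1] at h
      simp only [E0, E1, E2, Fin.sum_univ_three, Pi.add_apply, Pi.smul_apply, smul_eq_mul] at h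
      simp [dir_eq] at h
      linear_combination h
    · have h := congrFun h01 2
      simp only [vbracket, Pi.sub_apply, fd0, fd1] at h
      simp only [E0, E1, E2, Fin.sum_univ_three, Pi.add_apply, Pi.smul_apply, smul_eq_mul] at h
      simp [dir_eq] at h
      linear_combination h
  constructor
  · intro H p hp
    obtain ⟨A0, A1, A2, B0, B1, B2, C0, C1, C2⟩ := key p hp
    obtain ⟨h1, h2, h3, h4, h5⟩ := H p hp
    have hβp := hβ p hp
    have hζp := hζ p hp
    have hc201 : c 2 0 1 p = 0 := (mul_eq_zero.mp A2.symm).resolve_right hζp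
    have s1 : pd 0 α p = 0 := by linear_combination A0 + α p * h4 + δ p * hc201 + h1
    have s4 : pd 0 β p = 0 := by linear_combination A1 + β p * h4 + ε p * hc201
    have s5 : pd 0 ζ p = 0 := by linear_combination B2 + ζ p * h5
    have s2 : β p * pd 0 δ p = α p * pd 0 ε p := by
      linear_combination β p * B0 - α p * B1 + (β p * δ p - α p * ε p) * h5 + β p * h2
    refine ⟨s1, s2, ?_, s4, s5⟩
    linear_combination (ζ p * β p) * C0 - (ζ p * α p) * C1 + (α p * ε p - β p * δ p) * C2 +
      (ζ p * β p) * h3 - ((α p * ε p - β p * δ p) * α p) * s5 - (ζ p * α p) * s2 +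
      (ζ p * β p * δ p) * s1 - (ζ p * α p * δ p) * s4
  · intro H p hp
    obtain ⟨A0, A1, A2, B0, B1, B2, C0, C1, C2⟩ := key p hp
    obtain ⟨s1, s2, s3, s4, s5⟩ := H p hp
    have hβp := hβ p hp
    have hζp := hζ p hp
    have hc201 : c 2 0 1 p = 0 := (mul_eq_zero.mp A2.symm).resolve_right hζp
    have hc200 : c 2 0 0 p = 0 := by
      have h : c 2 0 0 p * β p = 0 := by linear_combination (-1 : ℝ) * A1 + s4 - ε p * hc201
      exact (mul_eq_zero.mp h).resolve_right hβp
    have hc202 : c 2 0 2 p = 0 := by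
      linear_combination (-1 : ℝ) * A0 + s1 - α p * hc200 - δ p * hc201
    have hc211 : c 2 1 1 p = 0 := by
      have h : c 2 1 1 p * ζ p = 0 := by linear_combination (-1 : ℝ) * B2 + s5
      exact (mul_eq_zero.mp h).resolve_right hζp
    have hc212 : c 2 1 2 p = 0 := by
      have h : c 2 1 2 p * β p = 0 := by
        linear_combination s2 - (β p * δ p - α p * ε p) * hc211 - β p * B0 + α p * B1
      exact (mul_eq_zero.mp h).resolve_right hβp
    have hc012 : c 0 1 2 p = 2 := by
      have h : ζ p * β p * (c 0 1 2 p - 2) = 0 := by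
        linear_combination s3 - (ζ p * β p) * C0 + (ζ p * α p) * C1 -
          (α p * ε p - β p * δ p) * C2 + (α p * ε p - β p * δ p) * α p * s5 +
          ζ p * α p * s2 - ζ p * β p * δ p * s1 + ζ p * α p * δ p * s4
      have h2 := (mul_eq_zero.mp h).resolve_left (mul_ne_zero hζp hβp)
      linarith [sub_eq_zero.mp h2]
    exact ⟨hc202, hc212, hc012, hc200, hc211⟩
end

section
/- Let U ⊆ ℝ³ be open and let α, β, δ, ε, ζ be smooth real-valued functions on U with β and ζ nowhere zero, satisfying the contact system (S1) α₁ = 0, (S2) βδ₁ = αε₁, (S3) β(αε − δβ)ζ₂ + (αβ₃ − βα₃)ζ² + (β²δ₂ − αβε₂ + αεβ₂ − βεα₂ − 2β)ζ = 0, (S4) β₁ = 0, (S5) ζ₁ = 0. Set F := δ − αε/β and define the 1-form η := dx¹ − (α/β) dx² − (F/ζ) dx³ on U. Then: (i) F₁ = 0, so all coefficients of η are independent of x¹; (ii) (η ∧ dη)(∂₁,∂₂,∂₃) = −2/(βζ) at every point of U; in particular η ∧ dη is nowhere zero, i.e. η is a contact form on U. -/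
lemma pd_const (i : Fin 3) (c : ℝ) (p : Fin 3 → ℝ) : pd i (fun _ => c) p = 0 := by
  simp [pd]

lemma pd_neg (i : Fin 3) (f : (Fin 3 → ℝ) → ℝ) (p : Fin 3 → ℝ) :
    pd i (fun q => -(f q)) p = -pd i f p := by
  simp [pd, fderiv_neg]

lemma pd_sub (i : Fin 3) {f g : (Fin 3 → ℝ) → ℝ} {p : Fin 3 → ℝ}
    (hf : DifferentiableAt ℝ f p) (hg : DifferentiableAt ℝ g p) :
    pd i (fun q => f q - g q) p = pd i f p - pd i g p := by
  simp [pd, fderiv_fun_sub hf hg]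

lemma pd_mul (i : Fin 3) {f g : (Fin 3 → ℝ) → ℝ} {p : Fin 3 → ℝ}
    (hf : DifferentiableAt ℝ f p) (hg : DifferentiableAt ℝ g p) :
    pd i (fun q => f q * g q) p = pd i f p * g p + f p * pd i g p := by
  unfold pd
  rw [fderiv_fun_mul hf hg]
  simp [smul_eq_mul]
  ring

lemma pd_inv (i : Fin 3) {g : (Fin 3 → ℝ) → ℝ} {p : Fin 3 → ℝ}
    (hg : DifferentiableAt ℝ g p) (h0 : g p ≠ 0) :
    pd i (fun q => (g q)⁻¹) p = -(pd i g p / g p ^ 2) := by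
  unfold pd
  have hc : fderiv ℝ (fun q => (g q)⁻¹) p
      = (fderiv ℝ Inv.inv (g p)).comp (fderiv ℝ g p) :=
    fderiv_comp p (differentiableAt_inv h0) hg
  rw [hc, fderiv_inv' h0]
  simp only [ContinuousLinearMap.comp_apply, ContinuousLinearMap.neg_apply,
    ContinuousLinearMap.mulLeftRight_apply]
  field_simp

lemma pd_div (i : Fin 3) {f g : (Fin 3 → ℝ) → ℝ} {p : Fin 3 → ℝ}
    (hf : DifferentiableAt ℝ f p) (hg : DifferentiableAt ℝ g p) (h0 : g p ≠ 0) :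
    pd i (fun q => f q / g q) p = (pd i f p * g p - f p * pd i g p) / g p ^ 2 := by
  have : (fun q => f q / g q) = fun q => f q * (g q)⁻¹ := by
    funext q; rw [div_eq_mul_inv]
  rw [this, pd_mul (g := fun q => (g q)⁻¹) i hf (hg.inv h0), pd_inv i hg h0]
  field_simp
  ring

lemma diffAt_div {f g : (Fin 3 → ℝ) → ℝ} {p : Fin 3 → ℝ}
    (hf : DifferentiableAt ℝ f p) (hg : DifferentiableAt ℝ g p) (h0 : g p ≠ 0) :
    DifferentiableAt ℝ (fun q => f q / g q) p := by
  simp only [div_eq_mul_inv]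
  exact hf.mul (hg.inv h0)

/-- if the contact system (S1)–(S5) holds on `U`, set `F := δ − αε/β` and
`η := dx¹ − (α/β)dx² − (F/ζ)dx³`, with coefficients `η₁ = 1`, `η₂ = −α/β`, `η₃ = −F/ζ`.
Then (i) `F₁ = 0` (and the coefficients of `η` are independent of `x¹`), and
(ii) `(η ∧ dη)(∂₁,∂₂,∂₃) = −2/(βζ) ≠ 0` at every point of `U`, where
`dη(∂ᵢ,∂ⱼ) = ∂ᵢηⱼ − ∂ⱼηᵢ` and
`(η∧dη)(∂₁,∂₂,∂₃) = η₁·dη(∂₂,∂₃) − η₂·dη(∂₁,∂₃) + η₃·dη(∂₁,∂₂)`.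
(Coordinates `x¹,x²,x³` are indices `0,1,2`.) -/
theorem stmt_10 (U : Set (Fin 3 → ℝ)) (hU : IsOpen U)
    (α β δ ε ζ : (Fin 3 → ℝ) → ℝ)
    (hα : ContDiffOn ℝ (⊤ : ℕ∞) α U) (hβs : ContDiffOn ℝ (⊤ : ℕ∞) β U)
    (hδ : ContDiffOn ℝ (⊤ : ℕ∞) δ U) (hε : ContDiffOn ℝ (⊤ : ℕ∞) ε U)
    (hζs : ContDiffOn ℝ (⊤ : ℕ∞) ζ U)
    (hβ : ∀ p ∈ U, β p ≠ 0) (hζ : ∀ p ∈ U, ζ p ≠ 0)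
    (hS1 : ∀ p ∈ U, pd 0 α p = 0)
    (hS2 : ∀ p ∈ U, β p * pd 0 δ p = α p * pd 0 ε p)
    (hS3 : ∀ p ∈ U,
      β p * (α p * ε p - δ p * β p) * pd 1 ζ p +
        (α p * pd 2 β p - β p * pd 2 α p) * ζ p ^ 2 +
        (β p ^ 2 * pd 1 δ p - α p * β p * pd 1 ε p + α p * ε p * pd 1 β p -
          β p * ε p * pd 1 α p - 2 * β p) * ζ p = 0)
    (hS4 : ∀ p ∈ U, pd 0 β p = 0)
    (hS5 : ∀ p ∈ U, pd 0 ζ p = 0)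
    (F η₁ η₂ η₃ : (Fin 3 → ℝ) → ℝ)
    (hF : F = fun p => δ p - α p * ε p / β p)
    (hη₁ : η₁ = fun _ => 1)
    (hη₂ : η₂ = fun p => -(α p / β p))
    (hη₃ : η₃ = fun p => -(F p / ζ p)) :
    (∀ p ∈ U, pd 0 F p = 0 ∧ pd 0 η₂ p = 0 ∧ pd 0 η₃ p = 0) ∧
    (∀ p ∈ U,
      η₁ p * (pd 1 η₃ p - pd 2 η₂ p) - η₂ p * (pd 0 η₃ p - pd 2 η₁ p) +
          η₃ p * (pd 0 η₂ p - pd 1 η₁ p) = -2 / (β p * ζ p) ∧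
      η₁ p * (pd 1 η₃ p - pd 2 η₂ p) - η₂ p * (pd 0 η₃ p - pd 2 η₁ p) +
          η₃ p * (pd 0 η₂ p - pd 1 η₁ p) ≠ 0) := by
  have hda : ∀ p ∈ U, DifferentiableAt ℝ α p := fun p hp =>
    (hα.contDiffAt (hU.mem_nhds hp)).differentiableAt (by simp)
  have hdb : ∀ p ∈ U, DifferentiableAt ℝ β p := fun p hp =>
    (hβs.contDiffAt (hU.mem_nhds hp)).differentiableAt (by simp)
  have hdd : ∀ p ∈ U, DifferentiableAt ℝ δ p := fun p hp =>
    (hδ.contDiffAt (hU.mem_nhds hp)).differentiableAt (by simp)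
  have hde : ∀ p ∈ U, DifferentiableAt ℝ ε p := fun p hp =>
    (hε.contDiffAt (hU.mem_nhds hp)).differentiableAt (by simp)
  have hdz : ∀ p ∈ U, DifferentiableAt ℝ ζ p := fun p hp =>
    (hζs.contDiffAt (hU.mem_nhds hp)).differentiableAt (by simp)
  have hdF : ∀ p ∈ U, DifferentiableAt ℝ F p := fun p hp => by
    rw [hF]
    exact (hdd p hp).sub (diffAt_div ((hda p hp).mul (hde p hp)) (hdb p hp) (hβ p hp))
  have pdF : ∀ p ∈ U, ∀ i, pd i F p = pd i δ p -
      ((pd i α p * ε p + α p * pd i ε p) * β p - α p * ε p * pd i β p) / β p ^ 2 := by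
    intro p hp i
    rw [hF, pd_sub i (hdd p hp) (diffAt_div (f := fun q => α q * ε q) ((hda p hp).mul (hde p hp)) (hdb p hp) (hβ p hp)),
      pd_div (f := fun q => α q * ε q) i ((hda p hp).mul (hde p hp)) (hdb p hp) (hβ p hp),
      pd_mul i (hda p hp) (hde p hp)]
  have h0F : ∀ p ∈ U, pd 0 F p = 0 := by
    intro p hp
    rw [pdF p hp 0, hS1 p hp, hS4 p hp]
    have hb := hβ p hp
    field_simp
    linear_combination β p * hS2 p hp
  have pdη₂ : ∀ p ∈ U, ∀ i, pd i η₂ p =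
      -((pd i α p * β p - α p * pd i β p) / β p ^ 2) := by
    intro p hp i
    rw [hη₂, pd_neg, pd_div i (hda p hp) (hdb p hp) (hβ p hp)]
  have pdη₃ : ∀ p ∈ U, ∀ i, pd i η₃ p =
      -((pd i F p * ζ p - F p * pd i ζ p) / ζ p ^ 2) := by
    intro p hp i
    rw [hη₃, pd_neg, pd_div i (hdF p hp) (hdz p hp) (hζ p hp)]
  have h0η₂ : ∀ p ∈ U, pd 0 η₂ p = 0 := by
    intro p hp
    rw [pdη₂ p hp 0, hS1 p hp, hS4 p hp]
    simp
  have h0η₃ : ∀ p ∈ U, pd 0 η₃ p = 0 := by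
    intro p hp
    rw [pdη₃ p hp 0, h0F p hp, hS5 p hp]
    simp
  refine ⟨fun p hp => ⟨h0F p hp, h0η₂ p hp, h0η₃ p hp⟩, fun p hp => ?_⟩
  have hb := hβ p hp
  have hz := hζ p hp
  have key : η₁ p * (pd 1 η₃ p - pd 2 η₂ p) - η₂ p * (pd 0 η₃ p - pd 2 η₁ p) +
      η₃ p * (pd 0 η₂ p - pd 1 η₁ p) = -2 / (β p * ζ p) := by
    rw [h0η₂ p hp, h0η₃ p hp, pdη₂ p hp 2, pdη₃ p hp 1, pdF p hp 1]
    simp only [hη₁, pd_const, hη₂, hη₃, hF]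
    field_simp
    linear_combination (-1) * hS3 p hp
  exact ⟨key, key ▸ div_ne_zero (by norm_num) (mul_ne_zero hb hz)⟩
end
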